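/- Suppose real-valued smooth functions χ₁, χ₂, χ₃ on an interval satisfy χ₁ ≠ 0 everywhere, 3χ₁χ₁' = 0, χ₁'' - χ₁³ - χ₁χ₂² + χ₁ = 0, 2χ₁'χ₂ + χ₁χ₂' = 0, and χ₁χ₂χ₃ = 0. Then χ₁ is constant with 0 < |χ₁| ≤ 1, χ₂² = 1 - χ₁², χ₂ is constant, and χ₂χ₃ = 0. -/

import Mathlib

/-- Suppose smooth real-valued functions `χ₁, χ₂, χ₃` on an interval (here the
whole real line) satisfy `χ₁ ≠ 0` everywhere, `3χ₁χ₁' = 0`,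
`χ₁'' - χ₁³ - χ₁χ₂² + χ₁ = 0`, `2χ₁'χ₂ + χ₁χ₂' = 0` and `χ₁χ₂χ₃ = 0`.
Then `χ₁` is constant with `0 < |χ₁| ≤ 1`, `χ₂² = 1 - χ₁²`, `χ₂` is constant
and `χ₂χ₃ = 0`. -/
theorem biharmonic_ode_system_solution
    (χ₁ χ₂ χ₃ : ℝ → ℝ)
    (hχ₁ : ContDiff ℝ (⊤ : ℕ∞) χ₁) (hχ₂ : ContDiff ℝ (⊤ : ℕ∞) χ₂) (hχ₃ : ContDiff ℝ (⊤ : ℕ∞) χ₃)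
    (hne : ∀ s, χ₁ s ≠ 0)
    (h1 : ∀ s, 3 * χ₁ s * deriv χ₁ s = 0)
    (h2 : ∀ s, deriv (deriv χ₁) s - (χ₁ s) ^ 3 - χ₁ s * (χ₂ s) ^ 2 + χ₁ s = 0)
    (h3 : ∀ s, 2 * deriv χ₁ s * χ₂ s + χ₁ s * deriv χ₂ s = 0)
    (h4 : ∀ s, χ₁ s * χ₂ s * χ₃ s = 0) :
    (∃ c : ℝ, (∀ s, χ₁ s = c) ∧ 0 < |c| ∧ |c| ≤ 1) ∧
      (∀ s, (χ₂ s) ^ 2 = 1 - (χ₁ s) ^ 2) ∧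
      (∃ d : ℝ, ∀ s, χ₂ s = d) ∧
      (∀ s, χ₂ s * χ₃ s = 0) := by
  have hd1 : ∀ s, deriv χ₁ s = 0 := by
    intro s
    have := h1 s
    have h3ne : (3 : ℝ) * χ₁ s ≠ 0 := by
      exact mul_ne_zero (by norm_num) (hne s)
    exact (mul_eq_zero.1 this).resolve_left h3ne
  have hdd1 : ∀ s, deriv (deriv χ₁) s = 0 := by
    have : deriv χ₁ = fun _ => (0 : ℝ) := funext hd1
    rw [this]; intro s; simp
  -- χ₂² = 1 - χ₁²
  have hsq : ∀ s, (χ₂ s) ^ 2 = 1 - (χ₁ s) ^ 2 := by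
    intro s
    have := h2 s
    rw [hdd1 s] at this
    have h := hne s
    have key : χ₁ s * ((χ₂ s) ^ 2 - (1 - (χ₁ s) ^ 2)) = 0 := by
      linear_combination -this
    have := (mul_eq_zero.1 key).resolve_left h
    linarith
  have hd2 : ∀ s, deriv χ₂ s = 0 := by
    intro s
    have := h3 s
    rw [hd1 s] at this
    simp at this
    rcases this with h | h
    · exact absurd h (hne s)
    · exact h
  have hconst : ∀ s, χ₁ s = χ₁ 0 :=
    fun s => is_const_of_deriv_eq_zero (hχ₁.differentiable (by simp)) hd1 s 0
  have hconst2 : ∀ s, χ₂ s = χ₂ 0 :=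
    fun s => is_const_of_deriv_eq_zero (hχ₂.differentiable (by simp)) hd2 s 0
  refine ⟨⟨χ₁ 0, hconst, abs_pos.2 (hne 0), ?_⟩, hsq, ⟨χ₂ 0, hconst2⟩, ?_⟩
  · have := hsq 0
    nlinarith [sq_nonneg (χ₂ 0), sq_abs (χ₁ 0), abs_nonneg (χ₁ 0)]
  · intro s
    have := h4 s
    rcases mul_eq_zero.1 this with h | h
    · rcases mul_eq_zero.1 h with h | h
      · exact absurd h (hne s)
      · simp [h]
    · simp [h]
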